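/- arXiv:2604.26641 — 10 statements merged into one kernel-verified Lean document; each statement's English description precedes it below -/
import Mathlib

section
/- Let U ⊆ ℂ be a nonempty open set, λ ∈ ℂ with λ ≠ 0, and let k₂, k₄, k₆ : ℂ → ℂ be holomorphic on U and satisfy D k₂ = (λ/2)·k₄ and D k₄ = (3λ/4)·k₆ on U, where D denotes the scaled derivative D f = (2πi)⁻¹·f′. Then the third equation of the dynamical system, D k₆ = (λ/4)·(k₄² − k₂k₆), holds on U if and only if the function y := −(λ/4)·k₂ satisfies the Chazy III equation D³y = y·D²y − (3/2)·(Dy)² on U. -/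
/-! Differentiating `y = -(λ/4)·k₂` three times with the first two equations of the system gives
`Dy = -(λ²/8)·k₄`, `D²y = -(3λ³/32)·k₆` and `D³y = -(3λ³/32)·D k₆`. Substituting these, the Chazy
equation becomes the third equation of the system multiplied by the nonzero constant `-(3λ³/32)`. -/

open Set

/-- The scaled derivative `D f = (2πi)⁻¹ · f′`. -/
noncomputable def D (f : ℂ → ℂ) : ℂ → ℂ :=
  fun z => (2 * (Real.pi : ℂ) * Complex.I)⁻¹ * deriv f z

theorem D_const_mul (c : ℂ) (f : ℂ → ℂ) : D (fun w => c * f w) = fun z => c * D f z := by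
  ext z
  simp only [D, deriv_const_mul_field]
  ring

theorem D_eqOn_of_eqOn {U : Set ℂ} (hU : IsOpen U) {f g : ℂ → ℂ} (h : EqOn f g U) :
    EqOn (D f) (D g) U := fun z hz => by
  simp only [D, (Filter.eventuallyEq_of_mem (hU.mem_nhds hz) h).deriv_eq]

theorem D_eqOn_const_mul_of_eqOn {U : Set ℂ} (hU : IsOpen U) {f g : ℂ → ℂ} {c : ℂ}
    (h : EqOn f (fun z => c * g z) U) : EqOn (D f) (fun z => c * D g z) U := by
  rw [← D_const_mul]
  exact D_eqOn_of_eqOn hU h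

theorem stmt_0_general (U : Set ℂ) (hUopen : IsOpen U)
    (lam : ℂ) (hlam : lam ≠ 0) (k₂ k₄ k₆ : ℂ → ℂ)
    (heq2 : ∀ z ∈ U, D k₂ z = lam / 2 * k₄ z)
    (heq4 : ∀ z ∈ U, D k₄ z = 3 * lam / 4 * k₆ z) :
    (∀ z ∈ U, D k₆ z = lam / 4 * (k₄ z ^ 2 - k₂ z * k₆ z)) ↔
      (∀ z ∈ U,
        D (D (D (fun w => -(lam / 4) * k₂ w))) z =
          (-(lam / 4) * k₂ z) * D (D (fun w => -(lam / 4) * k₂ w)) z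
            - 3 / 2 * (D (fun w => -(lam / 4) * k₂ w) z) ^ 2) := by
  set y : ℂ → ℂ := fun w => -(lam / 4) * k₂ w
  have hDy : EqOn (D y) (fun z => -(lam ^ 2 / 8) * k₄ z) U := fun z hz => by
    rw [D_const_mul]
    beta_reduce
    rw [heq2 z hz]
    ring
  have hD2y : EqOn (D (D y)) (fun z => -(3 * lam ^ 3 / 32) * k₆ z) U := fun z hz => by
    rw [D_eqOn_const_mul_of_eqOn hUopen hDy hz]
    beta_reduce
    rw [heq4 z hz]
    ring
  have hD3y := D_eqOn_const_mul_of_eqOn hUopen hD2y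
  have hc : -(3 * lam ^ 3 / 32) ≠ 0 := by simp [hlam]
  refine forall₂_congr fun z hz => ?_
  rw [hD3y hz, hD2y hz, hDy hz]
  beta_reduce
  constructor
  · intro h
    rw [h]
    ring
  · intro h
    refine mul_left_cancel₀ hc ?_
    rw [h]
    ring

theorem stmt_0 (U : Set ℂ) (hUopen : IsOpen U) (hUne : U.Nonempty)
    (lam : ℂ) (hlam : lam ≠ 0) (k₂ k₄ k₆ : ℂ → ℂ)
    (hk₂ : DifferentiableOn ℂ k₂ U) (hk₄ : DifferentiableOn ℂ k₄ U)
    (hk₆ : DifferentiableOn ℂ k₆ U)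
    (heq2 : ∀ z ∈ U, D k₂ z = lam / 2 * k₄ z)
    (heq4 : ∀ z ∈ U, D k₄ z = 3 * lam / 4 * k₆ z) :
    (∀ z ∈ U, D k₆ z = lam / 4 * (k₄ z ^ 2 - k₂ z * k₆ z)) ↔
      (∀ z ∈ U,
        D (D (D (fun w => -(lam / 4) * k₂ w))) z =
          (-(lam / 4) * k₂ z) * D (D (fun w => -(lam / 4) * k₂ w)) z
            - 3 / 2 * (D (fun w => -(lam / 4) * k₂ w) z) ^ 2) :=
  stmt_0_general U hUopen lam hlam k₂ k₄ k₆ heq2 heq4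
end

section
/- Let φ : ℂ → ℂ be holomorphic and define f : ℂ × ℂ → ℂ by f(x,y) = −x⁴·φ(y)/96. Let a = ∂³f/∂x²∂y, b = ∂³f/∂x³, c = ∂³f/∂x∂y², d = ∂³f/∂y³ (iterated partial derivatives of f). Then the associativity condition a(x,y)² − d(x,y) − b(x,y)·c(x,y) = 0 holds for all (x,y) ∈ ℂ × ℂ if and only if φ satisfies the Chazy III equation φ′′′(y) = φ(y)·φ′′(y) − (3/2)·φ′(y)² for all y ∈ ℂ. -/
/-- Partial derivative in the first variable of a function of two complex variables. -/
noncomputable def pderivX (g : ℂ → ℂ → ℂ) : ℂ → ℂ → ℂ :=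
  fun x y => deriv (fun x' => g x' y) x

/-- Partial derivative in the second variable of a function of two complex variables. -/
noncomputable def pderivY (g : ℂ → ℂ → ℂ) : ℂ → ℂ → ℂ :=
  fun x y => deriv (fun y' => g x y') y

/-!
The potential separates as `f x y = p x * φ y` with `p x = -x⁴/96`, so every partial derivative
acts on one factor only. The associator coefficient `a² - d - bc` then equals `x⁴/96` times the
Chazy III defect `φ‴ - (φ φ″ - 3/2 φ′²)`, which vanishes for all `x` exactly when the defect does.
-/

theorem pderivX_separable (p q : ℂ → ℂ) :
    pderivX (fun x y => p x * q y) = fun x y => deriv p x * q y := by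
  funext x y
  exact deriv_mul_const_field (q y)

theorem pderivY_separable (p q : ℂ → ℂ) :
    pderivY (fun x y => p x * q y) = fun x y => p x * deriv q y := by
  funext x y
  exact deriv_const_mul_field (p x)

theorem deriv_const_mul_pow {𝕜 : Type*} [NontriviallyNormedField 𝕜] (c : 𝕜) (n : ℕ) :
    deriv (fun x : 𝕜 => c * x ^ n) = fun x => c * n * x ^ (n - 1) := by
  funext x
  rw [deriv_const_mul_field, deriv_pow_field, mul_assoc]

theorem forall_pow_mul_eq_zero_iff {α R : Type*} [MonoidWithZero R] {n : ℕ} {g : α → R} :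
    (∀ (x : R) (y : α), x ^ n * g y = 0) ↔ ∀ y, g y = 0 :=
  ⟨fun h y => by simpa using h 1 y, fun h x y => by rw [h, mul_zero]⟩

theorem stmt_1_general (φ : ℂ → ℂ)
    (f : ℂ → ℂ → ℂ) (hf : f = fun x y => -(x ^ 4) * φ y / 96) :
    -- a = f_xxy, b = f_xxx, c = f_xyy, d = f_yyy
    (∀ x y : ℂ,
        (pderivX (pderivX (pderivY f)) x y) ^ 2
          - pderivY (pderivY (pderivY f)) x y
          - pderivX (pderivX (pderivX f)) x y * pderivY (pderivY (pderivX f)) x y = 0) ↔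
      (∀ y : ℂ, deriv (deriv (deriv φ)) y
          = φ y * deriv (deriv φ) y - 3 / 2 * (deriv φ y) ^ 2) := by
  have associator_eq : ∀ x y : ℂ,
      (pderivX (pderivX (pderivY f)) x y) ^ 2
          - pderivY (pderivY (pderivY f)) x y
          - pderivX (pderivX (pderivX f)) x y * pderivY (pderivY (pderivX f)) x y
        = x ^ 4 * ((deriv (deriv (deriv φ)) y
            - (φ y * deriv (deriv φ) y - 3 / 2 * (deriv φ y) ^ 2)) / 96) := by
    have hf_separated : f = fun x y => (-1 / 96 : ℂ) * x ^ 4 * φ y := by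
      rw [hf]; funext x y; ring
    intro x y
    simp only [hf_separated, pderivX_separable, pderivY_separable, deriv_const_mul_pow]
    norm_num
    ring
  simp only [associator_eq, forall_pow_mul_eq_zero_iff]
  simp [sub_eq_zero]

theorem stmt_1 (φ : ℂ → ℂ) (hφ : Differentiable ℂ φ)
    (f : ℂ → ℂ → ℂ) (hf : f = fun x y => -(x ^ 4) * φ y / 96) :
    -- a = f_xxy, b = f_xxx, c = f_xyy, d = f_yyy
    (∀ x y : ℂ,
        (pderivX (pderivX (pderivY f)) x y) ^ 2
          - pderivY (pderivY (pderivY f)) x y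
          - pderivX (pderivX (pderivX f)) x y * pderivY (pderivY (pderivX f)) x y = 0) ↔
      (∀ y : ℂ, deriv (deriv (deriv φ)) y
          = φ y * deriv (deriv φ) y - 3 / 2 * (deriv φ y) ^ 2) :=
  stmt_1_general φ f hf
end

section
/- Let K be a commutative ring and a, b, c, d ∈ K. Consider the free K-module K³ with basis e₁, e₂, e₃ and the commutative K-bilinear multiplication determined by: e₁ is a two-sided unit (e₁·x = x·e₁ = x for all x), e₂·e₂ = a·e₁ + b·e₂ + e₃, e₂·e₃ = e₃·e₂ = c·e₁ + a·e₂, and e₃·e₃ = d·e₁ + c·e₂. Then this multiplication is associative (i.e. (x·y)·z = x·(y·z) for all x, y, z ∈ K³) if and only if a² − d − bc = 0 in K. -/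
/-!
The obstruction to associativity is the single associator
`e₂ (e₂ e₃) - (e₂ e₂) e₃ = (a² - d - bc) e₁`, so associativity forces `a² - d - bc = 0`.
Conversely, once `d = a² - bc`, expanding three arbitrary vectors in the basis and using the
multiplication table reduces associativity to an identity of linear combinations.
-/

section MultiplicationTable

variable {R M : Type*} [CommRing R] [AddCommGroup M] [Module R M]
  (mul : M →ₗ[R] M →ₗ[R] M) {a b c d : R} {e₁ e₂ e₃ : M}

theorem associator_e₂_e₂_e₃
    (hunitl : ∀ x, mul e₁ x = x) (hunitr : ∀ x, mul x e₁ = x)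
    (h22 : mul e₂ e₂ = a • e₁ + b • e₂ + e₃)
    (h23 : mul e₂ e₃ = c • e₁ + a • e₂)
    (h33 : mul e₃ e₃ = d • e₁ + c • e₂) :
    mul e₂ (mul e₂ e₃) - mul (mul e₂ e₂) e₃ = (a ^ 2 - d - b * c) • e₁ := by
  simp only [map_add, map_smul, LinearMap.add_apply, LinearMap.smul_apply,
    hunitl, hunitr, h22, h23, h33]
  module

theorem mul_assoc_of_span_of_sq_sub_sub_mul_eq_zero
    (hspan : ∀ x, ∃ p q r : R, x = p • e₁ + q • e₂ + r • e₃)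
    (hunitl : ∀ x, mul e₁ x = x) (hunitr : ∀ x, mul x e₁ = x)
    (h22 : mul e₂ e₂ = a • e₁ + b • e₂ + e₃)
    (h23 : mul e₂ e₃ = c • e₁ + a • e₂)
    (h32 : mul e₃ e₂ = c • e₁ + a • e₂)
    (h33 : mul e₃ e₃ = d • e₁ + c • e₂)
    (h : a ^ 2 - d - b * c = 0) (x y z : M) :
    mul (mul x y) z = mul x (mul y z) := by
  obtain rfl : d = a ^ 2 - b * c := by linear_combination -h
  obtain ⟨x₁, x₂, x₃, rfl⟩ := hspan x
  obtain ⟨y₁, y₂, y₃, rfl⟩ := hspan y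
  obtain ⟨z₁, z₂, z₃, rfl⟩ := hspan z
  simp only [map_add, map_smul, LinearMap.add_apply, LinearMap.smul_apply, smul_add,
    hunitl, hunitr, h22, h23, h32, h33]
  module

end MultiplicationTable

theorem fin_three_eq_sum_smul_single {R : Type*} [Semiring R] (x : Fin 3 → R) :
    x = x 0 • Pi.single 0 1 + x 1 • Pi.single 1 1 + x 2 • Pi.single 2 1 := by
  funext i
  fin_cases i <;> simp

theorem stmt_3_general (K : Type*) [CommRing K] (a b c d : K)
    (mul : (Fin 3 → K) →ₗ[K] (Fin 3 → K) →ₗ[K] (Fin 3 → K))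
    (e₁ e₂ e₃ : Fin 3 → K)
    (he₁ : e₁ = Pi.single 0 1) (he₂ : e₂ = Pi.single 1 1) (he₃ : e₃ = Pi.single 2 1)
    (hunitl : ∀ x, mul e₁ x = x) (hunitr : ∀ x, mul x e₁ = x)
    (h22 : mul e₂ e₂ = a • e₁ + b • e₂ + e₃)
    (h23 : mul e₂ e₃ = c • e₁ + a • e₂)
    (h32 : mul e₃ e₂ = c • e₁ + a • e₂)
    (h33 : mul e₃ e₃ = d • e₁ + c • e₂) :
    (∀ x y z, mul (mul x y) z = mul x (mul y z)) ↔ a ^ 2 - d - b * c = 0 := by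
  subst he₁ he₂ he₃
  constructor
  · intro hassoc
    have hzero := associator_e₂_e₂_e₃ mul hunitl hunitr h22 h23 h33
    rw [hassoc, sub_self] at hzero
    simpa using (congrFun hzero 0).symm
  · exact mul_assoc_of_span_of_sq_sub_sub_mul_eq_zero mul
      (fun x => ⟨x 0, x 1, x 2, fin_three_eq_sum_smul_single x⟩)
      hunitl hunitr h22 h23 h32 h33

theorem stmt_3 (K : Type*) [CommRing K] (a b c d : K)
    (mul : (Fin 3 → K) →ₗ[K] (Fin 3 → K) →ₗ[K] (Fin 3 → K))
    (e₁ e₂ e₃ : Fin 3 → K)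
    (he₁ : e₁ = Pi.single 0 1) (he₂ : e₂ = Pi.single 1 1) (he₃ : e₃ = Pi.single 2 1)
    (hcomm : ∀ x y, mul x y = mul y x)
    (hunitl : ∀ x, mul e₁ x = x) (hunitr : ∀ x, mul x e₁ = x)
    (h22 : mul e₂ e₂ = a • e₁ + b • e₂ + e₃)
    (h23 : mul e₂ e₃ = c • e₁ + a • e₂)
    (h32 : mul e₃ e₂ = c • e₁ + a • e₂)
    (h33 : mul e₃ e₃ = d • e₁ + c • e₂) :
    (∀ x y z, mul (mul x y) z = mul x (mul y z)) ↔ a ^ 2 - d - b * c = 0 :=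
  stmt_3_general K a b c d mul e₁ e₂ e₃ he₁ he₂ he₃ hunitl hunitr h22 h23 h32 h33
end

section
/- Let K = ℤ[a,b,c,d] be the polynomial ring over ℤ in four variables a, b, c, d, and let I be an ideal of K with quotient L = K/I. Consider the free L-module L³ with basis e₁, e₂, e₃ and the commutative L-bilinear multiplication determined by the images of a, b, c, d in L via: e₁ a two-sided unit, e₂·e₂ = a·e₁ + b·e₂ + e₃, e₂·e₃ = e₃·e₂ = c·e₁ + a·e₂, e₃·e₃ = d·e₁ + c·e₂. Then this multiplication on L³ is associative if and only if the polynomial a² − d − bc belongs to I. In particular, the principal ideal (a² − d − bc) is the minimal ideal I of K (with respect to inclusion) for which the algebra over K/I is associative. -/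
/-!
Since the product is bilinear, associativity only has to be checked on basis triples. The unit
disposes of every triple containing `e₁`; commutativity disposes of the triples `(x, y, x)` and
makes `(z, y, x)` equivalent to `(x, y, z)`. This leaves `(e₂, e₂, e₃)` and `(e₂, e₃, e₃)`, whose
associators are `-(a² - d - bc) e₁` and `(a² - d - bc) e₂` by the multiplication table.
-/

open MvPolynomial

/-- The quotient `L = ℤ[a,b,c,d]/I`. -/
abbrev Lq (I : Ideal (MvPolynomial (Fin 4) ℤ)) : Type :=
  MvPolynomial (Fin 4) ℤ ⧸ I

namespace LinearMap

section CommSemiring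

variable {R M : Type*} [CommSemiring R] [AddCommMonoid M] [Module R M] (mul : M →ₗ[R] M →ₗ[R] M)

theorem assoc_of_assoc_on_span {s : Set M} (hs : Submodule.span R s = ⊤)
    (h : ∀ x ∈ s, ∀ y ∈ s, ∀ z ∈ s, mul (mul x y) z = mul x (mul y z)) :
    ∀ x y z, mul (mul x y) z = mul x (mul y z) := by
  have hz : ∀ x ∈ s, ∀ y ∈ s, ∀ z, mul (mul x y) z = mul x (mul y z) := fun x hx y hy =>
    LinearMap.congr_fun (ext_on (f := mul (mul x y)) (g := mul x ∘ₗ mul y) hs (h x hx y hy))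
  have hy : ∀ x ∈ s, ∀ y z, mul (mul x y) z = mul x (mul y z) := fun x hx y z =>
    LinearMap.congr_fun (ext_on (f := mul.flip z ∘ₗ mul x) (g := mul x ∘ₗ mul.flip z) hs
      (fun y hy => hz x hx y hy z)) y
  intro x y z
  exact LinearMap.congr_fun (ext_on (f := mul.flip z ∘ₗ mul.flip y) (g := mul.flip (mul y z)) hs
    (fun x hx => hy x hx y z)) x

variable {mul}

theorem assoc_swap_of_comm (hcomm : ∀ x y, mul x y = mul y x) {x y z : M}
    (h : mul (mul x y) z = mul x (mul y z)) : mul (mul z y) x = mul z (mul y x) := by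
  rw [hcomm (mul z y) x, hcomm z y, ← h, hcomm (mul x y) z, hcomm x y]

theorem assoc_iff_of_comm_of_span_eq_top (hcomm : ∀ x y, mul x y = mul y x) {e u v : M}
    (hunit : ∀ x, mul e x = x) (hspan : Submodule.span R {e, u, v} = ⊤) :
    (∀ x y z, mul (mul x y) z = mul x (mul y z)) ↔
      mul (mul u u) v = mul u (mul u v) ∧ mul (mul u v) v = mul u (mul v v) := by
  refine ⟨fun h => ⟨h u u v, h u v v⟩, fun ⟨huuv, huvv⟩ => ?_⟩
  have hunitr : ∀ x, mul x e = x := fun x => (hcomm x e).trans (hunit x)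
  have hself : ∀ x y, mul (mul x y) x = mul x (mul y x) := fun x y => by
    rw [hcomm (mul x y), hcomm y x]
  refine assoc_of_assoc_on_span mul hspan ?_
  simp only [Set.mem_insert_iff, Set.mem_singleton_iff]
  rintro x (rfl | rfl | rfl) y (rfl | rfl | rfl) z (rfl | rfl | rfl) <;>
    first
    | simp only [hunit, hunitr]
    | exact hself _ _
    | assumption
    | exact assoc_swap_of_comm hcomm ‹_›

end CommSemiring

section CommRing

variable {R M : Type*} [CommRing R] [AddCommGroup M] [Module R M] {mul : M →ₗ[R] M →ₗ[R] M}

theorem assoc_sub_of_table_two_two_three (hcomm : ∀ x y, mul x y = mul y x) {a b c d : R}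
    {e₁ e₂ e₃ : M} (hunit : ∀ x, mul e₁ x = x) (h22 : mul e₂ e₂ = a • e₁ + b • e₂ + e₃)
    (h23 : mul e₂ e₃ = c • e₁ + a • e₂) (h33 : mul e₃ e₃ = d • e₁ + c • e₂) :
    mul (mul e₂ e₂) e₃ - mul e₂ (mul e₂ e₃) = -(a ^ 2 - d - b * c) • e₁ := by
  have h21 : mul e₂ e₁ = e₂ := (hcomm e₂ e₁).trans (hunit e₂)
  simp only [map_add, map_smul, add_apply, smul_apply, hunit,
    h21, h22, h23, h33]
  module

theorem assoc_sub_of_table_two_three_three (hcomm : ∀ x y, mul x y = mul y x) {a b c d : R}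
    {e₁ e₂ e₃ : M} (hunit : ∀ x, mul e₁ x = x) (h22 : mul e₂ e₂ = a • e₁ + b • e₂ + e₃)
    (h23 : mul e₂ e₃ = c • e₁ + a • e₂) (h33 : mul e₃ e₃ = d • e₁ + c • e₂) :
    mul (mul e₂ e₃) e₃ - mul e₂ (mul e₃ e₃) = (a ^ 2 - d - b * c) • e₂ := by
  have h21 : mul e₂ e₁ = e₂ := (hcomm e₂ e₁).trans (hunit e₂)
  simp only [map_add, map_smul, add_apply, smul_apply, hunit,
    h21, h22, h23, h33]
  module

end CommRing

end LinearMap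

theorem Pi.span_single_fin_three (R : Type*) [Semiring R] :
    Submodule.span R {Pi.single 0 1, Pi.single 1 1, Pi.single 2 1} =
      (⊤ : Submodule R (Fin 3 → R)) := by
  convert (Pi.basisFun R (Fin 3)).span_eq
  ext v
  simp [Fin.exists_fin_succ, eq_comm]

theorem Pi.smul_single_one_eq_zero_iff {ι R : Type*} [DecidableEq ι] [Semiring R] (i : ι)
    (r : R) : r • (Pi.single i 1 : ι → R) = 0 ↔ r = 0 := by
  rw [← Pi.single_smul', smul_eq_mul, mul_one, Pi.single_eq_zero_iff]

theorem stmt_4_general (I : Ideal (MvPolynomial (Fin 4) ℤ))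
    (a b c d : Lq I)
    (ha : a = Ideal.Quotient.mk I (X 0)) (hb : b = Ideal.Quotient.mk I (X 1))
    (hc : c = Ideal.Quotient.mk I (X 2)) (hd : d = Ideal.Quotient.mk I (X 3))
    (mul : (Fin 3 → Lq I) →ₗ[Lq I] (Fin 3 → Lq I) →ₗ[Lq I] (Fin 3 → Lq I))
    (e₁ e₂ e₃ : Fin 3 → Lq I)
    (he₁ : e₁ = Pi.single 0 1) (he₂ : e₂ = Pi.single 1 1) (he₃ : e₃ = Pi.single 2 1)
    (hcomm : ∀ x y, mul x y = mul y x)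
    (hunitl : ∀ x, mul e₁ x = x)
    (h22 : mul e₂ e₂ = a • e₁ + b • e₂ + e₃)
    (h23 : mul e₂ e₃ = c • e₁ + a • e₂)
    (h33 : mul e₃ e₃ = d • e₁ + c • e₂) :
    (∀ x y z, mul (mul x y) z = mul x (mul y z)) ↔
      (X 0 : MvPolynomial (Fin 4) ℤ) ^ 2 - X 3 - X 1 * X 2 ∈ I := by
  have hmem :
      (X 0 : MvPolynomial (Fin 4) ℤ) ^ 2 - X 3 - X 1 * X 2 ∈ I ↔ a ^ 2 - d - b * c = 0 := by
    rw [← Ideal.Quotient.eq_zero_iff_mem, map_sub, map_sub, map_pow, map_mul, ha, hb, hc, hd]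
  have hspan : Submodule.span (Lq I) {e₁, e₂, e₃} = ⊤ := by
    rw [he₁, he₂, he₃]
    exact Pi.span_single_fin_three _
  rw [LinearMap.assoc_iff_of_comm_of_span_eq_top hcomm hunitl hspan, ← sub_eq_zero,
    ← sub_eq_zero (a := mul (mul e₂ e₃) e₃),
    LinearMap.assoc_sub_of_table_two_two_three hcomm hunitl h22 h23 h33,
    LinearMap.assoc_sub_of_table_two_three_three hcomm hunitl h22 h23 h33, he₁, he₂, neg_smul,
    neg_eq_zero, Pi.smul_single_one_eq_zero_iff, Pi.smul_single_one_eq_zero_iff, and_self, hmem]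

theorem stmt_4 (I : Ideal (MvPolynomial (Fin 4) ℤ))
    (a b c d : Lq I)
    (ha : a = Ideal.Quotient.mk I (X 0)) (hb : b = Ideal.Quotient.mk I (X 1))
    (hc : c = Ideal.Quotient.mk I (X 2)) (hd : d = Ideal.Quotient.mk I (X 3))
    (mul : (Fin 3 → Lq I) →ₗ[Lq I] (Fin 3 → Lq I) →ₗ[Lq I] (Fin 3 → Lq I))
    (e₁ e₂ e₃ : Fin 3 → Lq I)
    (he₁ : e₁ = Pi.single 0 1) (he₂ : e₂ = Pi.single 1 1) (he₃ : e₃ = Pi.single 2 1)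
    (hcomm : ∀ x y, mul x y = mul y x)
    (hunitl : ∀ x, mul e₁ x = x) (hunitr : ∀ x, mul x e₁ = x)
    (h22 : mul e₂ e₂ = a • e₁ + b • e₂ + e₃)
    (h23 : mul e₂ e₃ = c • e₁ + a • e₂)
    (h32 : mul e₃ e₂ = c • e₁ + a • e₂)
    (h33 : mul e₃ e₃ = d • e₁ + c • e₂) :
    (∀ x y z, mul (mul x y) z = mul x (mul y z)) ↔
      (X 0 : MvPolynomial (Fin 4) ℤ) ^ 2 - X 3 - X 1 * X 2 ∈ I :=
  stmt_4_general I a b c d ha hb hc hd mul e₁ e₂ e₃ he₁ he₂ he₃ hcomm hunitl h22 h23 h33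
end

section
/- Let t₁, t₂, t₃ ∈ ℂ with Δ := 27t₃² − t₂³ ≠ 0. For F₁, F₂, F₃ ∈ ℂ set θ(v) := 3t₃F₂ − 2t₂F₃ and dΔ(v) := 54t₃F₃ − 3t₂²F₂. Then the horizontality conditions for the Gauss–Manin connection matrix, namely the four equations −(3/2)t₁·θ(v) − (1/12)·dΔ(v) = 0, (3/2)·θ(v) = −Δ, Δ·F₁ − (1/6)t₁·dΔ(v) − ((3/2)t₁² + (1/8)t₂)·θ(v) = 0, and (3/2)t₁·θ(v) + (1/12)·dΔ(v) = 0, hold if and only if F₁ = t₁² − (1/12)t₂, F₂ = 4t₁t₂ − 6t₃, and F₃ = 6t₁t₃ − (1/3)t₂². In particular, for each point (t₁,t₂,t₃) with Δ ≠ 0 there exists a unique vector (F₁,F₂,F₃) satisfying these equations. -/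
/-!
The entries of `A(v)` involve `F₂, F₃` only through `θ(v)` and `dΔ(v)`, and the map
`(F₂, F₃) ↦ (θ(v), dΔ(v))` has determinant `6Δ`, so the two diagonal entries (which are
negatives of each other) and the upper-right entry pin down `(F₂, F₃)` by Cramer's rule.
The lower-left entry is then `Δ · F₁` minus a known multiple of `Δ`, which determines `F₁`.
-/

namespace GaussManin

variable {K : Type*}

section CommRing

variable [CommRing K]

def discriminant (t₂ t₃ : K) : K := 27 * t₃ ^ 2 - t₂ ^ 3

/-- `θ(v)` for `v = F₂ ∂/∂t₂ + F₃ ∂/∂t₃`. -/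
def theta (t₂ t₃ F₂ F₃ : K) : K := 3 * t₃ * F₂ - 2 * t₂ * F₃

/-- `dΔ(v)` for `v = F₂ ∂/∂t₂ + F₃ ∂/∂t₃`. -/
def dDiscriminant (t₂ t₃ F₂ F₃ : K) : K := 54 * t₃ * F₃ - 3 * t₂ ^ 2 * F₂

theorem six_mul_discriminant_mul_left (t₂ t₃ F₂ F₃ : K) :
    6 * discriminant t₂ t₃ * F₂ =
      54 * t₃ * theta t₂ t₃ F₂ F₃ + 2 * t₂ * dDiscriminant t₂ t₃ F₂ F₃ := by
  unfold discriminant theta dDiscriminant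
  ring

theorem six_mul_discriminant_mul_right (t₂ t₃ F₂ F₃ : K) :
    6 * discriminant t₂ t₃ * F₃ =
      3 * t₂ ^ 2 * theta t₂ t₃ F₂ F₃ + 3 * t₃ * dDiscriminant t₂ t₃ F₂ F₃ := by
  unfold discriminant theta dDiscriminant
  ring

end CommRing

section Field

variable [Field K] [CharZero K]

theorem eq_of_theta_eq_of_dDiscriminant_eq {t₂ t₃ F₂ F₃ G₂ G₃ : K}
    (hΔ : discriminant t₂ t₃ ≠ 0) (hθ : theta t₂ t₃ F₂ F₃ = theta t₂ t₃ G₂ G₃)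
    (hdΔ : dDiscriminant t₂ t₃ F₂ F₃ = dDiscriminant t₂ t₃ G₂ G₃) :
    F₂ = G₂ ∧ F₃ = G₃ := by
  have h6Δ : 6 * discriminant t₂ t₃ ≠ 0 := mul_ne_zero (by norm_num) hΔ
  constructor <;> apply mul_left_cancel₀ h6Δ
  · rw [six_mul_discriminant_mul_left, six_mul_discriminant_mul_left, hθ, hdΔ]
  · rw [six_mul_discriminant_mul_right, six_mul_discriminant_mul_right, hθ, hdΔ]

/-- The four entries of `A(v) - [[0, -1], [0, 0]]`, for `v = F₁ ∂/∂t₁ + F₂ ∂/∂t₂ + F₃ ∂/∂t₃`,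
set to zero. -/
def IsHorizontal (t₁ t₂ t₃ F₁ F₂ F₃ : K) : Prop :=
  -(3 / 2) * t₁ * theta t₂ t₃ F₂ F₃ - 1 / 12 * dDiscriminant t₂ t₃ F₂ F₃ = 0 ∧
    3 / 2 * theta t₂ t₃ F₂ F₃ = -discriminant t₂ t₃ ∧
    discriminant t₂ t₃ * F₁ - 1 / 6 * t₁ * dDiscriminant t₂ t₃ F₂ F₃
        - (3 / 2 * t₁ ^ 2 + 1 / 8 * t₂) * theta t₂ t₃ F₂ F₃ = 0 ∧
    3 / 2 * t₁ * theta t₂ t₃ F₂ F₃ + 1 / 12 * dDiscriminant t₂ t₃ F₂ F₃ = 0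

def ramanujan (t₁ t₂ t₃ : K) : K × K × K :=
  (t₁ ^ 2 - 1 / 12 * t₂, 4 * t₁ * t₂ - 6 * t₃, 6 * t₁ * t₃ - 1 / 3 * t₂ ^ 2)

theorem theta_ramanujan (t₁ t₂ t₃ : K) :
    theta t₂ t₃ (ramanujan t₁ t₂ t₃).2.1 (ramanujan t₁ t₂ t₃).2.2 =
      -(2 / 3) * discriminant t₂ t₃ := by
  unfold theta ramanujan discriminant
  ring

theorem dDiscriminant_ramanujan (t₁ t₂ t₃ : K) :
    dDiscriminant t₂ t₃ (ramanujan t₁ t₂ t₃).2.1 (ramanujan t₁ t₂ t₃).2.2 =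
      12 * t₁ * discriminant t₂ t₃ := by
  unfold dDiscriminant ramanujan discriminant
  ring

theorem isHorizontal_ramanujan (t₁ t₂ t₃ : K) :
    IsHorizontal t₁ t₂ t₃ (ramanujan t₁ t₂ t₃).1 (ramanujan t₁ t₂ t₃).2.1
      (ramanujan t₁ t₂ t₃).2.2 := by
  unfold IsHorizontal
  rw [theta_ramanujan, dDiscriminant_ramanujan]
  refine ⟨by ring, by ring, ?_, by ring⟩
  simp only [ramanujan]
  ring

theorem isHorizontal_iff {t₁ t₂ t₃ : K} (hΔ : discriminant t₂ t₃ ≠ 0) {F : K × K × K} :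
    IsHorizontal t₁ t₂ t₃ F.1 F.2.1 F.2.2 ↔ F = ramanujan t₁ t₂ t₃ := by
  refine ⟨fun ⟨_, h₂, h₃, h₄⟩ => ?_, by rintro rfl; exact isHorizontal_ramanujan t₁ t₂ t₃⟩
  obtain ⟨F₁, F₂, F₃⟩ := F
  have hθ : theta t₂ t₃ F₂ F₃ = -(2 / 3) * discriminant t₂ t₃ := by
    linear_combination 2 / 3 * h₂
  have hdΔ : dDiscriminant t₂ t₃ F₂ F₃ = 12 * t₁ * discriminant t₂ t₃ := by
    linear_combination 12 * h₄ - 18 * t₁ * hθ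
  obtain ⟨rfl, rfl⟩ := eq_of_theta_eq_of_dDiscriminant_eq hΔ
    (hθ.trans (theta_ramanujan t₁ t₂ t₃).symm)
    (hdΔ.trans (dDiscriminant_ramanujan t₁ t₂ t₃).symm)
  have hF₁ : F₁ = t₁ ^ 2 - 1 / 12 * t₂ := by
    apply mul_left_cancel₀ hΔ
    rw [hθ, hdΔ] at h₃
    linear_combination h₃
  rw [hF₁]
  rfl

end Field

end GaussManin

open GaussManin in
theorem stmt_6 (t₁ t₂ t₃ : ℂ) (hΔ : 27 * t₃ ^ 2 - t₂ ^ 3 ≠ 0) :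
    (∀ F₁ F₂ F₃ : ℂ,
      (-(3 / 2) * t₁ * (3 * t₃ * F₂ - 2 * t₂ * F₃)
            - 1 / 12 * (54 * t₃ * F₃ - 3 * t₂ ^ 2 * F₂) = 0 ∧
        3 / 2 * (3 * t₃ * F₂ - 2 * t₂ * F₃) = -(27 * t₃ ^ 2 - t₂ ^ 3) ∧
        (27 * t₃ ^ 2 - t₂ ^ 3) * F₁
            - 1 / 6 * t₁ * (54 * t₃ * F₃ - 3 * t₂ ^ 2 * F₂)
            - (3 / 2 * t₁ ^ 2 + 1 / 8 * t₂) * (3 * t₃ * F₂ - 2 * t₂ * F₃) = 0 ∧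
        3 / 2 * t₁ * (3 * t₃ * F₂ - 2 * t₂ * F₃)
            + 1 / 12 * (54 * t₃ * F₃ - 3 * t₂ ^ 2 * F₂) = 0) ↔
      (F₁ = t₁ ^ 2 - 1 / 12 * t₂ ∧ F₂ = 4 * t₁ * t₂ - 6 * t₃ ∧
        F₃ = 6 * t₁ * t₃ - 1 / 3 * t₂ ^ 2)) ∧
    (∃! F : ℂ × ℂ × ℂ,
      -(3 / 2) * t₁ * (3 * t₃ * F.2.1 - 2 * t₂ * F.2.2)
            - 1 / 12 * (54 * t₃ * F.2.2 - 3 * t₂ ^ 2 * F.2.1) = 0 ∧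
        3 / 2 * (3 * t₃ * F.2.1 - 2 * t₂ * F.2.2) = -(27 * t₃ ^ 2 - t₂ ^ 3) ∧
        (27 * t₃ ^ 2 - t₂ ^ 3) * F.1
            - 1 / 6 * t₁ * (54 * t₃ * F.2.2 - 3 * t₂ ^ 2 * F.2.1)
            - (3 / 2 * t₁ ^ 2 + 1 / 8 * t₂) * (3 * t₃ * F.2.1 - 2 * t₂ * F.2.2) = 0 ∧
        3 / 2 * t₁ * (3 * t₃ * F.2.1 - 2 * t₂ * F.2.2)
            + 1 / 12 * (54 * t₃ * F.2.2 - 3 * t₂ ^ 2 * F.2.1) = 0) := by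
  have key (F : ℂ × ℂ × ℂ) : IsHorizontal t₁ t₂ t₃ F.1 F.2.1 F.2.2 ↔ F = ramanujan t₁ t₂ t₃ :=
    isHorizontal_iff hΔ
  refine ⟨fun F₁ F₂ F₃ => (key (F₁, F₂, F₃)).trans ?_, (existsUnique_congr key).mpr existsUnique_eq⟩
  simp only [ramanujan, Prod.mk.injEq]
end

section
/- Let Ω ⊆ ℂ be open, let y : ℂ → ℂ be holomorphic on Ω and satisfy the Chazy equation y′′′ = 2y·y′′ − 3(y′)² on Ω. Let g = (a, b; c, d) be a matrix with complex entries and determinant ad − bc = 1. Define ỹ(τ) := (cτ+d)⁻²·y((aτ+b)/(cτ+d)) − 6c/(cτ+d) on the open set Ω′ := {τ ∈ ℂ : cτ + d ≠ 0 and (aτ+b)/(cτ+d) ∈ Ω}. Then ỹ is holomorphic on Ω′ and satisfies ỹ′′′ = 2ỹ·ỹ′′ − 3(ỹ′)² on Ω′. -/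
/-! Write `f ∣ₖ g` for `τ ↦ (cτ + d)⁻ᵏ f(gτ)`. Since `g'(τ) = (cτ + d)⁻²` when `ad - bc = 1`,
the chain rule gives `(f ∣ₖ g)' = f' ∣ₖ₊₂ g - k c (f ∣ₖ₊₁ g)`, and the constant term of `ỹ`
is `-6c (1 ∣₁ g)`. Iterating three times writes `ỹ, ỹ', ỹ'', ỹ'''` as explicit combinations
of the `y⁽ʲ⁾ ∣ₖ g` and `1 ∣ₖ g`; after substituting the Chazy equation for `y''' ∘ g`, the Chazy
equation for `ỹ` is a polynomial identity in these quantities. -/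

open Set

noncomputable def moebiusSlash (a b c d : ℂ) (k : ℕ) (f : ℂ → ℂ) (σ : ℂ) : ℂ :=
  (c * σ + d)⁻¹ ^ k * f ((a * σ + b) / (c * σ + d))

lemma isOpen_moebius_preimage {Ω : Set ℂ} (hΩ : IsOpen Ω) (a b c d : ℂ) :
    IsOpen {τ : ℂ | c * τ + d ≠ 0 ∧ (a * τ + b) / (c * τ + d) ∈ Ω} :=
  (ContinuousOn.div (by fun_prop) (by fun_prop) fun _ h => h).isOpen_inter_preimage
    (isOpen_ne_fun (by fun_prop) (by fun_prop)) hΩ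

section Derivatives

variable {a b c d τ : ℂ}

lemma hasDerivAt_moebius (hdet : a * d - b * c = 1) (hτ : c * τ + d ≠ 0) :
    HasDerivAt (fun σ => (a * σ + b) / (c * σ + d)) ((c * τ + d)⁻¹ ^ 2) τ := by
  have hnum : HasDerivAt (fun σ => a * σ + b) a τ := by
    simpa using ((hasDerivAt_id τ).const_mul a).add_const b
  have hden : HasDerivAt (fun σ => c * σ + d) c τ := by
    simpa using ((hasDerivAt_id τ).const_mul c).add_const d
  refine (hnum.div hden hτ).congr_deriv ?_
  field_simp
  linear_combination hdet

lemma hasDerivAt_inv_linear_pow (hτ : c * τ + d ≠ 0) (k : ℕ) :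
    HasDerivAt (fun σ => (c * σ + d)⁻¹ ^ k) (-(k * c * (c * τ + d)⁻¹ ^ (k + 1))) τ := by
  have hden : HasDerivAt (fun σ => c * σ + d) c τ := by
    simpa using ((hasDerivAt_id τ).const_mul c).add_const d
  refine ((hden.inv hτ).pow k).congr_deriv ?_
  rcases k with _ | k
  · simp
  · simp only [Nat.cast_add, Nat.cast_one, add_tsub_cancel_right, Pi.inv_apply, div_eq_mul_inv,
      ← inv_pow]
    ring

lemma hasDerivAt_moebiusSlash (hdet : a * d - b * c = 1) (hτ : c * τ + d ≠ 0) (k : ℕ)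
    {f f' : ℂ → ℂ}
    (hf : HasDerivAt f (f' ((a * τ + b) / (c * τ + d))) ((a * τ + b) / (c * τ + d))) :
    HasDerivAt (moebiusSlash a b c d k f)
      (moebiusSlash a b c d (k + 2) f' τ - k * c * moebiusSlash a b c d (k + 1) f τ) τ := by
  refine ((hasDerivAt_inv_linear_pow hτ k).mul
    (hf.comp τ (hasDerivAt_moebius hdet hτ))).congr_deriv ?_
  simp only [moebiusSlash, Function.comp_apply]
  ring

lemma hasDerivAt_moebiusSlash_one (hdet : a * d - b * c = 1) (hτ : c * τ + d ≠ 0) (k : ℕ) :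
    HasDerivAt (moebiusSlash a b c d k 1) (-(k * c * moebiusSlash a b c d (k + 1) 1 τ)) τ := by
  refine (hasDerivAt_moebiusSlash hdet hτ k (f' := 0) (hasDerivAt_const _ (1 : ℂ))).congr_deriv ?_
  simp only [moebiusSlash, Pi.zero_apply, Pi.one_apply, mul_zero, mul_one, zero_sub]

end Derivatives

section Chazy

variable {a b c d τ : ℂ} {y₀ y₁ y₂ y₃ : ℂ → ℂ}

lemma hasDerivAt_chazySlash_zero (hdet : a * d - b * c = 1) (hτ : c * τ + d ≠ 0)
    (h₀ : HasDerivAt y₀ (y₁ ((a * τ + b) / (c * τ + d))) ((a * τ + b) / (c * τ + d))) :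
    HasDerivAt (fun σ => moebiusSlash a b c d 2 y₀ σ - 6 * c * moebiusSlash a b c d 1 1 σ)
      (moebiusSlash a b c d 4 y₁ τ - 2 * c * moebiusSlash a b c d 3 y₀ τ
        + 6 * c ^ 2 * moebiusSlash a b c d 2 1 τ) τ := by
  refine ((hasDerivAt_moebiusSlash hdet hτ 2 h₀).sub
    ((hasDerivAt_moebiusSlash_one hdet hτ 1).const_mul (6 * c))).congr_deriv ?_
  push_cast
  ring

lemma hasDerivAt_chazySlash_one (hdet : a * d - b * c = 1) (hτ : c * τ + d ≠ 0)
    (h₀ : HasDerivAt y₀ (y₁ ((a * τ + b) / (c * τ + d))) ((a * τ + b) / (c * τ + d)))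
    (h₁ : HasDerivAt y₁ (y₂ ((a * τ + b) / (c * τ + d))) ((a * τ + b) / (c * τ + d))) :
    HasDerivAt (fun σ => moebiusSlash a b c d 4 y₁ σ - 2 * c * moebiusSlash a b c d 3 y₀ σ
        + 6 * c ^ 2 * moebiusSlash a b c d 2 1 σ)
      (moebiusSlash a b c d 6 y₂ τ - 6 * c * moebiusSlash a b c d 5 y₁ τ
        + 6 * c ^ 2 * moebiusSlash a b c d 4 y₀ τ - 12 * c ^ 3 * moebiusSlash a b c d 3 1 τ) τ := by
  refine (((hasDerivAt_moebiusSlash hdet hτ 4 h₁).sub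
    ((hasDerivAt_moebiusSlash hdet hτ 3 h₀).const_mul (2 * c))).add
    ((hasDerivAt_moebiusSlash_one hdet hτ 2).const_mul (6 * c ^ 2))).congr_deriv ?_
  push_cast
  ring

lemma hasDerivAt_chazySlash_two (hdet : a * d - b * c = 1) (hτ : c * τ + d ≠ 0)
    (h₀ : HasDerivAt y₀ (y₁ ((a * τ + b) / (c * τ + d))) ((a * τ + b) / (c * τ + d)))
    (h₁ : HasDerivAt y₁ (y₂ ((a * τ + b) / (c * τ + d))) ((a * τ + b) / (c * τ + d)))
    (h₂ : HasDerivAt y₂ (y₃ ((a * τ + b) / (c * τ + d))) ((a * τ + b) / (c * τ + d))) :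
    HasDerivAt (fun σ => moebiusSlash a b c d 6 y₂ σ - 6 * c * moebiusSlash a b c d 5 y₁ σ
        + 6 * c ^ 2 * moebiusSlash a b c d 4 y₀ σ - 12 * c ^ 3 * moebiusSlash a b c d 3 1 σ)
      (moebiusSlash a b c d 8 y₃ τ - 12 * c * moebiusSlash a b c d 7 y₂ τ
        + 36 * c ^ 2 * moebiusSlash a b c d 6 y₁ τ - 24 * c ^ 3 * moebiusSlash a b c d 5 y₀ τ
        + 36 * c ^ 4 * moebiusSlash a b c d 4 1 τ) τ := by
  refine ((((hasDerivAt_moebiusSlash hdet hτ 6 h₂).sub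
    ((hasDerivAt_moebiusSlash hdet hτ 5 h₁).const_mul (6 * c))).add
    ((hasDerivAt_moebiusSlash hdet hτ 4 h₀).const_mul (6 * c ^ 2))).sub
    ((hasDerivAt_moebiusSlash_one hdet hτ 3).const_mul (12 * c ^ 3))).congr_deriv ?_
  push_cast
  ring

lemma moebiusSlash_chazy_identity
    (h : y₃ ((a * τ + b) / (c * τ + d)) = 2 * y₀ ((a * τ + b) / (c * τ + d))
      * y₂ ((a * τ + b) / (c * τ + d)) - 3 * y₁ ((a * τ + b) / (c * τ + d)) ^ 2) :
    moebiusSlash a b c d 8 y₃ τ - 12 * c * moebiusSlash a b c d 7 y₂ τ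
        + 36 * c ^ 2 * moebiusSlash a b c d 6 y₁ τ - 24 * c ^ 3 * moebiusSlash a b c d 5 y₀ τ
        + 36 * c ^ 4 * moebiusSlash a b c d 4 1 τ
      = 2 * (moebiusSlash a b c d 2 y₀ τ - 6 * c * moebiusSlash a b c d 1 1 τ)
          * (moebiusSlash a b c d 6 y₂ τ - 6 * c * moebiusSlash a b c d 5 y₁ τ
            + 6 * c ^ 2 * moebiusSlash a b c d 4 y₀ τ - 12 * c ^ 3 * moebiusSlash a b c d 3 1 τ)
        - 3 * (moebiusSlash a b c d 4 y₁ τ - 2 * c * moebiusSlash a b c d 3 y₀ τ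
            + 6 * c ^ 2 * moebiusSlash a b c d 2 1 τ) ^ 2 := by
  simp only [moebiusSlash, Pi.one_apply, h]
  ring

end Chazy

theorem stmt_7 (Ω : Set ℂ) (hΩ : IsOpen Ω) (y : ℂ → ℂ)
    (hy : DifferentiableOn ℂ y Ω)
    (hchazy : ∀ τ ∈ Ω, deriv (deriv (deriv y)) τ
        = 2 * y τ * deriv (deriv y) τ - 3 * (deriv y τ) ^ 2)
    (a b c d : ℂ) (hdet : a * d - b * c = 1)
    (ytil : ℂ → ℂ)
    (hytil : ytil = fun τ => ((c * τ + d) ^ 2)⁻¹ * y ((a * τ + b) / (c * τ + d))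
        - 6 * c / (c * τ + d))
    (Ω' : Set ℂ)
    (hΩ' : Ω' = {τ : ℂ | c * τ + d ≠ 0 ∧ (a * τ + b) / (c * τ + d) ∈ Ω}) :
    DifferentiableOn ℂ ytil Ω' ∧
      ∀ τ ∈ Ω', deriv (deriv (deriv ytil)) τ
          = 2 * ytil τ * deriv (deriv ytil) τ - 3 * (deriv ytil τ) ^ 2 := by
  have hslash :
      ytil = fun σ => moebiusSlash a b c d 2 y σ - 6 * c * moebiusSlash a b c d 1 1 σ := by
    rw [hytil]
    funext σ
    simp only [moebiusSlash, Pi.one_apply, div_eq_mul_inv, inv_pow]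
    ring
  subst hslash
  have hmem : ∀ τ ∈ Ω', c * τ + d ≠ 0 ∧ (a * τ + b) / (c * τ + d) ∈ Ω := hΩ' ▸ fun _ h => h
  have hopen : IsOpen Ω' := hΩ' ▸ isOpen_moebius_preimage hΩ a b c d
  have hY : AnalyticOnNhd ℂ y Ω := hy.analyticOnNhd hΩ
  have hd {f : ℂ → ℂ} (hf : AnalyticOnNhd ℂ f Ω) {τ : ℂ} (hτ : τ ∈ Ω') :
      HasDerivAt f (deriv f ((a * τ + b) / (c * τ + d))) ((a * τ + b) / (c * τ + d)) :=
    (hf _ (hmem τ hτ).2).differentiableAt.hasDerivAt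
  have D₀ := fun τ hτ => hasDerivAt_chazySlash_zero hdet (hmem τ hτ).1 (hd hY hτ)
  have D₁ := fun τ hτ => hasDerivAt_chazySlash_one hdet (hmem τ hτ).1 (hd hY hτ) (hd hY.deriv hτ)
  have D₂ := fun τ hτ => hasDerivAt_chazySlash_two hdet (hmem τ hτ).1 (hd hY hτ)
    (hd hY.deriv hτ) (hd hY.deriv.deriv hτ)
  have e₁ : EqOn (deriv _) _ Ω' := fun τ hτ => (D₀ τ hτ).deriv
  have e₂ : EqOn (deriv (deriv _)) _ Ω' := fun τ hτ => (e₁.deriv hopen hτ).trans (D₁ τ hτ).deriv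
  have e₃ : EqOn (deriv (deriv (deriv _))) _ Ω' := fun τ hτ =>
    (e₂.deriv hopen hτ).trans (D₂ τ hτ).deriv
  refine ⟨fun τ hτ => (D₀ τ hτ).differentiableAt.differentiableWithinAt, fun τ hτ => ?_⟩
  rw [e₃ hτ, e₂ hτ, e₁ hτ]
  exact moebiusSlash_chazy_identity (hchazy _ (hmem τ hτ).2)
end

section
/- Let Ω ⊆ ℂ be open and let y : ℂ → ℂ be holomorphic on Ω satisfying the Chazy equation y′′′ = 2y·y′′ − 3(y′)² on Ω. Define Q := y² − 6y′, R := y³ − 9y·y′ + 9y′′, and Δ := Q³ − R². Then on Ω the following identities hold: Q′ = (2/3)·(y·Q − R), R′ = y·R − Q², and Δ′ = 2y·Δ. -/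
/-!
Differentiating `Q` and `R` with the product rule expresses `Q'` and `R'` through `y, y', y'', y'''`;
eliminating `y'''` with the Chazy equation turns these into polynomial identities in `y, Q, R`.
The equation for `Δ` then follows from those for `Q` and `R` alone:
`Δ' = 3Q²·(2/3)(yQ - R) - 2R(yR - Q²) = 2y(Q³ - R²)`.
-/

variable {𝕜 : Type*} [NontriviallyNormedField 𝕜] {y : 𝕜 → 𝕜} {x : 𝕜}

noncomputable def chazyQ (y : 𝕜 → 𝕜) (x : 𝕜) : 𝕜 := y x ^ 2 - 6 * deriv y x

noncomputable def chazyR (y : 𝕜 → 𝕜) (x : 𝕜) : 𝕜 := y x ^ 3 - 9 * y x * deriv y x + 9 * deriv (deriv y) x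

theorem hasDerivAt_chazyQ [CharZero 𝕜] (h₀ : DifferentiableAt 𝕜 y x)
    (h₁ : DifferentiableAt 𝕜 (deriv y) x) :
    HasDerivAt (chazyQ y) (2 / 3 * (y x * chazyQ y x - chazyR y x)) x := by
  refine ((h₀.hasDerivAt.pow 2).sub (h₁.hasDerivAt.const_mul 6)).congr_deriv ?_
  simp only [chazyQ, chazyR]
  ring

theorem hasDerivAt_chazyR (h₀ : DifferentiableAt 𝕜 y x) (h₁ : DifferentiableAt 𝕜 (deriv y) x)
    (h₂ : DifferentiableAt 𝕜 (deriv (deriv y)) x)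
    (hchazy : deriv (deriv (deriv y)) x = 2 * y x * deriv (deriv y) x - 3 * deriv y x ^ 2) :
    HasDerivAt (chazyR y) (y x * chazyR y x - chazyQ y x ^ 2) x := by
  refine (((h₀.hasDerivAt.pow 3).sub ((h₀.hasDerivAt.const_mul 9).mul h₁.hasDerivAt)).add
    (h₂.hasDerivAt.const_mul 9)).congr_deriv ?_
  rw [hchazy, chazyQ, chazyR]
  ring

theorem hasDerivAt_cube_sub_sq [CharZero 𝕜] {Q R : 𝕜 → 𝕜} {a : 𝕜}
    (hQ : HasDerivAt Q (2 / 3 * (a * Q x - R x)) x) (hR : HasDerivAt R (a * R x - Q x ^ 2) x) :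
    HasDerivAt (fun t => Q t ^ 3 - R t ^ 2) (2 * a * (Q x ^ 3 - R x ^ 2)) x := by
  refine ((hQ.pow 3).sub (hR.pow 2)).congr_deriv ?_
  ring

theorem stmt_9 (Ω : Set ℂ) (hΩ : IsOpen Ω) (y : ℂ → ℂ)
    (hy : DifferentiableOn ℂ y Ω)
    (hchazy : ∀ τ ∈ Ω, deriv (deriv (deriv y)) τ
        = 2 * y τ * deriv (deriv y) τ - 3 * (deriv y τ) ^ 2)
    (Q R Δ : ℂ → ℂ)
    (hQ : Q = fun τ => y τ ^ 2 - 6 * deriv y τ)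
    (hR : R = fun τ => y τ ^ 3 - 9 * y τ * deriv y τ + 9 * deriv (deriv y) τ)
    (hΔ : Δ = fun τ => Q τ ^ 3 - R τ ^ 2) :
    ∀ τ ∈ Ω,
      deriv Q τ = 2 / 3 * (y τ * Q τ - R τ) ∧
      deriv R τ = y τ * R τ - Q τ ^ 2 ∧
      deriv Δ τ = 2 * y τ * Δ τ := by
  intro τ hτ
  have hy₀ : AnalyticOnNhd ℂ y Ω := hy.analyticOnNhd hΩ
  have hy₁ : AnalyticOnNhd ℂ (deriv y) Ω := hy₀.deriv
  have hy₂ : AnalyticOnNhd ℂ (deriv (deriv y)) Ω := hy₁.deriv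
  have hQ' : HasDerivAt Q (2 / 3 * (y τ * Q τ - R τ)) τ := by
    subst hQ hR
    exact hasDerivAt_chazyQ (hy₀ τ hτ).differentiableAt (hy₁ τ hτ).differentiableAt
  have hR' : HasDerivAt R (y τ * R τ - Q τ ^ 2) τ := by
    subst hQ hR
    exact hasDerivAt_chazyR (hy₀ τ hτ).differentiableAt (hy₁ τ hτ).differentiableAt
      (hy₂ τ hτ).differentiableAt (hchazy τ hτ)
  subst hΔ
  exact ⟨hQ'.deriv, hR'.deriv, (hasDerivAt_cube_sub_sq hQ' hR').deriv⟩
end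

section
/- Let Ω ⊆ ℂ be open and let y : ℂ → ℂ be holomorphic on Ω satisfying the Chazy equation y′′′ = 2y·y′′ − 3(y′)² on Ω. Define Q := y² − 6y′, R := y³ − 9y·y′ + 9y′′, and Δ := Q³ − R². Assume Δ ≡ 0 on Ω (i.e. Q³ = R² identically on Ω) and Q(τ) ≠ 0 for all τ ∈ Ω. Then the function u := R/Q satisfies u² = Q and u³ = R on Ω, and the function w := y − u satisfies the Riccati equation w′ = w²/6 on Ω. -/
/-!
Since `Q ≠ 0` and `Q³ = R²`, the quotient `u = R/Q` is a square root of `Q` whose cube is `R`.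
Differentiating `u² = Q = y² - 6y'` gives `2uu' = 2yy' - 6y''`; combined with `uQ = R` and
cancelling the nonzero factor `u`, this is exactly `6 (y' - u') = (y - u)²`.
-/

open Filter Topology

theorem div_sq_eq_and_div_pow_three_eq {K : Type*} [Field K] {Q R : K} (hQ : Q ≠ 0)
    (hQR : Q ^ 3 = R ^ 2) : (R / Q) ^ 2 = Q ∧ (R / Q) ^ 3 = R := by
  constructor
  · rw [div_pow, div_eq_iff (pow_ne_zero 2 hQ)]
    linear_combination -hQR
  · rw [div_pow, div_eq_iff (pow_ne_zero 3 hQ)]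
    linear_combination -R * hQR

theorem riccati_identity {K : Type*} [CommRing K] [IsDomain K] {y y' y'' u u' : K}
    (hu : u ≠ 0) (hsq : u ^ 2 = y ^ 2 - 6 * y')
    (hsq' : 2 * u * u' = 2 * y * y' - 6 * y'')
    (hmul : u * (y ^ 2 - 6 * y') = y ^ 3 - 9 * y * y' + 9 * y'') :
    6 * (y' - u') = (y - u) ^ 2 := by
  have h : u * (6 * (y' - u') - (y - u) ^ 2) = 0 := by
    linear_combination (-3 : K) * hsq' + (2 * y - u) * hsq - 2 * hmul
  linear_combination (mul_eq_zero.mp h).resolve_left hu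

theorem two_mul_mul_deriv_eq_of_sq_eventuallyEq {f g : ℂ → ℂ} {g' x : ℂ}
    (hf : DifferentiableAt ℂ f x) (hg : HasDerivAt g g' x) (hfg : (fun t => f t ^ 2) =ᶠ[𝓝 x] g) :
    2 * f x * deriv f x = g' := by
  have hf2 : HasDerivAt (fun t => f t ^ 2) (2 * f x * deriv f x) x := by
    simpa using hf.hasDerivAt.fun_pow 2
  exact hf2.unique (hg.congr_of_eventuallyEq hfg)

theorem deriv_sub_eq_sq_div_six_of_sq_eq {Ω : Set ℂ} (hΩ : IsOpen Ω) {y u : ℂ → ℂ}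
    (hy : DifferentiableOn ℂ y Ω) (hu : DifferentiableOn ℂ u Ω) (hu0 : ∀ τ ∈ Ω, u τ ≠ 0)
    (hsq : ∀ τ ∈ Ω, u τ ^ 2 = y τ ^ 2 - 6 * deriv y τ)
    (hmul : ∀ τ ∈ Ω, u τ * (y τ ^ 2 - 6 * deriv y τ)
      = y τ ^ 3 - 9 * y τ * deriv y τ + 9 * deriv (deriv y) τ)
    {τ : ℂ} (hτ : τ ∈ Ω) :
    deriv (fun t => y t - u t) τ = (y τ - u τ) ^ 2 / 6 := by
  have hΩτ : Ω ∈ 𝓝 τ := hΩ.mem_nhds hτ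
  have hyτ : DifferentiableAt ℂ y τ := hy.differentiableAt hΩτ
  have huτ : DifferentiableAt ℂ u τ := hu.differentiableAt hΩτ
  have hy'τ : DifferentiableAt ℂ (deriv y) τ := (hy.deriv hΩ).differentiableAt hΩτ
  have hQ : HasDerivAt (fun t => y t ^ 2 - 6 * deriv y t)
      (2 * y τ * deriv y τ - 6 * deriv (deriv y) τ) τ := by
    simpa using (hyτ.hasDerivAt.fun_pow 2).fun_sub (hy'τ.hasDerivAt.const_mul 6)
  have hsq' := two_mul_mul_deriv_eq_of_sq_eventuallyEq huτ hQ (eventually_of_mem hΩτ hsq)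
  rw [deriv_fun_sub hyτ huτ, eq_div_iff (by norm_num)]
  linear_combination riccati_identity (hu0 τ hτ) (hsq τ hτ) hsq' (hmul τ hτ)

theorem stmt_10_general (Ω : Set ℂ) (hΩ : IsOpen Ω) (y : ℂ → ℂ)
    (hy : DifferentiableOn ℂ y Ω)
    (Q R Δ : ℂ → ℂ)
    (hQ : Q = fun τ => y τ ^ 2 - 6 * deriv y τ)
    (hR : R = fun τ => y τ ^ 3 - 9 * y τ * deriv y τ + 9 * deriv (deriv y) τ)
    (hΔ : Δ = fun τ => Q τ ^ 3 - R τ ^ 2)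
    (hΔ0 : ∀ τ ∈ Ω, Δ τ = 0)
    (hQ0 : ∀ τ ∈ Ω, Q τ ≠ 0)
    (u w : ℂ → ℂ)
    (hu : u = fun τ => R τ / Q τ)
    (hw : w = fun τ => y τ - u τ) :
    (∀ τ ∈ Ω, u τ ^ 2 = Q τ ∧ u τ ^ 3 = R τ) ∧
      (∀ τ ∈ Ω, deriv w τ = w τ ^ 2 / 6) := by
  have hpow : ∀ τ ∈ Ω, u τ ^ 2 = Q τ ∧ u τ ^ 3 = R τ := fun τ hτ => by
    subst hu
    exact div_sq_eq_and_div_pow_three_eq (hQ0 τ hτ) (by simpa [hΔ, sub_eq_zero] using hΔ0 τ hτ)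
  refine ⟨hpow, fun τ hτ => ?_⟩
  have hy' := hy.deriv hΩ
  have hQd : DifferentiableOn ℂ Q Ω := hQ ▸ (hy.pow 2).sub (hy'.const_mul 6)
  have hRd : DifferentiableOn ℂ R Ω :=
    hR ▸ ((hy.pow 3).sub ((hy.const_mul 9).mul hy')).add ((hy'.deriv hΩ).const_mul 9)
  have hud : DifferentiableOn ℂ u Ω := hu ▸ hRd.div hQd hQ0
  have hu0 : ∀ τ ∈ Ω, u τ ≠ 0 := fun τ hτ h => hQ0 τ hτ (by simp [← (hpow τ hτ).1, h])
  have hmul : ∀ τ ∈ Ω, u τ * Q τ = R τ := fun τ hτ => by simp [hu, hQ0 τ hτ]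
  subst hw
  exact deriv_sub_eq_sq_div_six_of_sq_eq hΩ hy hud hu0
    (fun τ hτ => by simpa [hQ] using (hpow τ hτ).1)
    (fun τ hτ => by simpa [hQ, hR] using hmul τ hτ) hτ

theorem stmt_10 (Ω : Set ℂ) (hΩ : IsOpen Ω) (y : ℂ → ℂ)
    (hy : DifferentiableOn ℂ y Ω)
    (hchazy : ∀ τ ∈ Ω, deriv (deriv (deriv y)) τ
        = 2 * y τ * deriv (deriv y) τ - 3 * (deriv y τ) ^ 2)
    (Q R Δ : ℂ → ℂ)
    (hQ : Q = fun τ => y τ ^ 2 - 6 * deriv y τ)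
    (hR : R = fun τ => y τ ^ 3 - 9 * y τ * deriv y τ + 9 * deriv (deriv y) τ)
    (hΔ : Δ = fun τ => Q τ ^ 3 - R τ ^ 2)
    (hΔ0 : ∀ τ ∈ Ω, Δ τ = 0)
    (hQ0 : ∀ τ ∈ Ω, Q τ ≠ 0)
    (u w : ℂ → ℂ)
    (hu : u = fun τ => R τ / Q τ)
    (hw : w = fun τ => y τ - u τ) :
    (∀ τ ∈ Ω, u τ ^ 2 = Q τ ∧ u τ ^ 3 = R τ) ∧
      (∀ τ ∈ Ω, deriv w τ = w τ ^ 2 / 6) :=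
  stmt_10_general Ω hΩ y hy Q R Δ hQ hR hΔ hΔ0 hQ0 u w hu hw
end

section
/- Let ζ₁, ζ₂, η₁, η₂, α, g₂, g₃ ∈ ℂ with ζ₁ ≠ ζ₂, and suppose η₁² = (ζ₁+α)³ − (g₂/4)(ζ₁+α) − g₃/4 and η₂² = (ζ₂+α)³ − (g₂/4)(ζ₂+α) − g₃/4. Define Θ₀ = 16(ζ₁−ζ₂)², Θ₁ = 8·(2g₃ + g₂(ζ₁+ζ₂+2α) − 4·(ζ₁ζ₂(ζ₁+ζ₂) + 6ζ₁ζ₂α + 3(ζ₁+ζ₂)α² + 2α³)), and Θ₂ = (g₂+4ζ₁ζ₂)² + 16g₂(ζ₁+ζ₂)α + 24(g₂−4ζ₁ζ₂)α² − 64(ζ₁+ζ₂)α³ − 48α⁴ + 16g₃(ζ₁+ζ₂+3α). Set z₃⁺ := −ζ₁ − ζ₂ − 3α + ((η₁+η₂)/(ζ₁−ζ₂))² and z₃⁻ := −ζ₁ − ζ₂ − 3α + ((η₁−η₂)/(ζ₁−ζ₂))². Then for every z ∈ ℂ, Θ₀z² + Θ₁z + Θ₂ = Θ₀·(z − z₃⁺)·(z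 − z₃⁻); equivalently, z₃⁺ + z₃⁻ = −Θ₁/Θ₀ and z₃⁺·z₃⁻ = Θ₂/Θ₀. -/
/-!
With `a₂ = 3α`, `a₄ = 3α² - g₂/4`, `a₆ = α³ - g₂α/4 - g₃/4` (and `a₁ = a₃ = 0`), the points
`(ζᵢ, ηᵢ)` lie on a Weierstrass curve and `z₃^∓` are the `x`-coordinates of `P ± Q`.
On any Weierstrass curve, `(x₁ - x₂)²` times the sum and the product of `x(P + Q)` and
`x(P - Q)` are polynomials in `x₁, x₂` and the invariants `b₂, b₄, b₆, b₈`: the `y`-dependence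
cancels modulo the two curve equations. For this curve these polynomials are `-Θ₁/16` and
`Θ₂/16`, so `Θ₀ z² + Θ₁ z + Θ₂` is `Θ₀ = 16 (ζ₁ - ζ₂)²` times the monic quadratic with roots
`z₃^±`.
-/

namespace WeierstrassCurve.Affine

variable {F : Type*} [Field F] [DecidableEq F] {W : Affine F} {x₁ x₂ y₁ y₂ : F}

theorem addX_add_addX_negY (h₁ : W.Equation x₁ y₁) (h₂ : W.Equation x₂ y₂) (hx : x₁ ≠ x₂) :
    W.addX x₁ x₂ (W.slope x₁ x₂ y₁ y₂) + W.addX x₁ x₂ (W.slope x₁ x₂ y₁ (W.negY x₂ y₂)) =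
      (2 * x₁ * x₂ * (x₁ + x₂) + W.b₂ * x₁ * x₂ + W.b₄ * (x₁ + x₂) + W.b₆) / (x₁ - x₂) ^ 2 := by
  rw [equation_iff] at h₁ h₂
  have hd : x₁ - x₂ ≠ 0 := sub_ne_zero.2 hx
  rw [slope_of_X_ne hx, slope_of_X_ne hx, eq_div_iff (pow_ne_zero 2 hd)]
  simp only [addX, negY, b₂, b₄, b₆]
  field_simp
  linear_combination 2 * h₁ + 2 * h₂

theorem addX_mul_addX_negY (h₁ : W.Equation x₁ y₁) (h₂ : W.Equation x₂ y₂) (hx : x₁ ≠ x₂) :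
    W.addX x₁ x₂ (W.slope x₁ x₂ y₁ y₂) * W.addX x₁ x₂ (W.slope x₁ x₂ y₁ (W.negY x₂ y₂)) =
      (x₁ ^ 2 * x₂ ^ 2 - W.b₄ * x₁ * x₂ - W.b₆ * (x₁ + x₂) - W.b₈) / (x₁ - x₂) ^ 2 := by
  rw [equation_iff] at h₁ h₂
  have hd : x₁ - x₂ ≠ 0 := sub_ne_zero.2 hx
  rw [slope_of_X_ne hx, slope_of_X_ne hx, eq_div_iff (pow_ne_zero 2 hd)]
  apply mul_left_cancel₀ (pow_ne_zero 2 hd)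
  simp only [addX, negY, b₄, b₆, b₈]
  field_simp
  set F₁ := y₁ ^ 2 + W.a₁ * x₁ * y₁ + W.a₃ * y₁
  set F₂ := y₂ ^ 2 + W.a₁ * x₂ * y₂ + W.a₃ * y₂
  set f₁ := x₁ ^ 3 + W.a₂ * x₁ ^ 2 + W.a₄ * x₁ + W.a₆
  set f₂ := x₂ ^ 3 + W.a₂ * x₂ ^ 2 + W.a₄ * x₂ + W.a₆
  set K := (W.a₂ + x₁ + x₂) * (x₁ - x₂) ^ 2
  set c₁ := W.a₁ * x₁ + W.a₃
  set c₂ := W.a₁ * x₂ + W.a₃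
  -- `(x₁ - x₂)⁴ x(P + Q) x(P - Q)` is the polynomial
  -- `P(F₁, F₂) = (F₁ + F₂ - K)² + c₁c₂(F₁ + F₂ - K) - 4F₁F₂ - c₂²F₁ - c₁²F₂`, and `P(f₁, f₂)` is
  -- `(x₁ - x₂)²` times the right-hand side; the coefficients are the difference quotients of
  -- `P(F₁, F₂) - P(f₁, F₂)` and `P(f₁, F₂) - P(f₁, f₂)`.
  linear_combination (F₁ + f₁ - 2 * F₂ - 2 * K + c₁ * c₂ - c₂ ^ 2) * h₁
    + (F₂ + f₂ - 2 * f₁ - 2 * K + c₁ * c₂ - c₁ ^ 2) * h₂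

end WeierstrassCurve.Affine

theorem quadratic_eq_mul_sub_mul_sub {R : Type*} [CommRing R] {a b c p q : R}
    (hsum : a * (p + q) = -b) (hprod : a * (p * q) = c) (z : R) :
    a * z ^ 2 + b * z + c = a * (z - p) * (z - q) := by
  linear_combination z * hsum - hprod

open WeierstrassCurve WeierstrassCurve.Affine

theorem stmt_16 (ζ₁ ζ₂ η₁ η₂ α g₂ g₃ : ℂ) (hne : ζ₁ ≠ ζ₂)
    (h1 : η₁ ^ 2 = (ζ₁ + α) ^ 3 - g₂ / 4 * (ζ₁ + α) - g₃ / 4)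
    (h2 : η₂ ^ 2 = (ζ₂ + α) ^ 3 - g₂ / 4 * (ζ₂ + α) - g₃ / 4)
    (Θ₀ Θ₁ Θ₂ z₃p z₃m : ℂ)
    (hΘ₀ : Θ₀ = 16 * (ζ₁ - ζ₂) ^ 2)
    (hΘ₁ : Θ₁ = 8 * (2 * g₃ + g₂ * (ζ₁ + ζ₂ + 2 * α)
        - 4 * (ζ₁ * ζ₂ * (ζ₁ + ζ₂) + 6 * ζ₁ * ζ₂ * α
            + 3 * (ζ₁ + ζ₂) * α ^ 2 + 2 * α ^ 3)))
    (hΘ₂ : Θ₂ = (g₂ + 4 * ζ₁ * ζ₂) ^ 2 + 16 * g₂ * (ζ₁ + ζ₂) * α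
        + 24 * (g₂ - 4 * ζ₁ * ζ₂) * α ^ 2 - 64 * (ζ₁ + ζ₂) * α ^ 3 - 48 * α ^ 4
        + 16 * g₃ * (ζ₁ + ζ₂ + 3 * α))
    (hzp : z₃p = -ζ₁ - ζ₂ - 3 * α + ((η₁ + η₂) / (ζ₁ - ζ₂)) ^ 2)
    (hzm : z₃m = -ζ₁ - ζ₂ - 3 * α + ((η₁ - η₂) / (ζ₁ - ζ₂)) ^ 2) :
    (∀ z : ℂ, Θ₀ * z ^ 2 + Θ₁ * z + Θ₂ = Θ₀ * (z - z₃p) * (z - z₃m)) ∧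
      z₃p + z₃m = -Θ₁ / Θ₀ ∧ z₃p * z₃m = Θ₂ / Θ₀ := by
  let W : Affine ℂ := ⟨0, 3 * α, 0, 3 * α ^ 2 - g₂ / 4, α ^ 3 - g₂ * α / 4 - g₃ / 4⟩
  have hW₁ : W.Equation ζ₁ η₁ := by rw [equation_iff]; linear_combination h1
  have hW₂ : W.Equation ζ₂ η₂ := by rw [equation_iff]; linear_combination h2
  have hzp' : z₃p = W.addX ζ₁ ζ₂ (W.slope ζ₁ ζ₂ η₁ (W.negY ζ₂ η₂)) := by
    rw [hzp, slope_of_X_ne hne]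
    simp only [addX, negY, W]
    ring
  have hzm' : z₃m = W.addX ζ₁ ζ₂ (W.slope ζ₁ ζ₂ η₁ η₂) := by
    rw [hzm, slope_of_X_ne hne]
    simp only [addX, W]
    ring
  have hd : (ζ₁ - ζ₂) ^ 2 ≠ 0 := pow_ne_zero 2 (sub_ne_zero.2 hne)
  have hΘ₀' : Θ₀ ≠ 0 := hΘ₀ ▸ mul_ne_zero (by norm_num) hd
  have hsum : Θ₀ * (z₃p + z₃m) = -Θ₁ := by
    rw [add_comm z₃p, hzp', hzm', addX_add_addX_negY hW₁ hW₂ hne, hΘ₀, hΘ₁, mul_assoc,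
      mul_div_cancel₀ _ hd]
    simp only [b₂, b₄, b₆, W]
    ring
  have hprod : Θ₀ * (z₃p * z₃m) = Θ₂ := by
    rw [mul_comm z₃p, hzp', hzm', addX_mul_addX_negY hW₁ hW₂ hne, hΘ₀, hΘ₂, mul_assoc,
      mul_div_cancel₀ _ hd]
    simp only [b₄, b₆, b₈, W]
    ring
  exact ⟨quadratic_eq_mul_sub_mul_sub hsum hprod,
    eq_div_of_mul_eq hΘ₀' (by rw [mul_comm, hsum]),
    eq_div_of_mul_eq hΘ₀' (by rw [mul_comm, hprod])⟩
end

section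
/- Let U ⊆ ℂ be a nonempty open set and let e₂, e₄, e₆ : ℂ → ℂ be holomorphic on U satisfying the Ramanujan system D e₂ = (e₂² − e₄)/12, D e₄ = (e₂e₄ − e₆)/3, D e₆ = (e₂e₆ − e₄²)/2 on U, where D denotes the scaled derivative D f = (2πi)⁻¹·f′. Then y := e₂ satisfies the Chazy III equation D³y = y·D²y − (3/2)·(Dy)² on U. -/
open Complex Real Set

lemma HasDerivAt.D_eq {f : ℂ → ℂ} {z w : ℂ} (h : HasDerivAt f (2 * π * I * w) z) :
    D f z = w := by
  rw [D, h.deriv, inv_mul_cancel_left₀ two_pi_I_ne_zero]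

lemma DifferentiableAt.hasDerivAt_D {f : ℂ → ℂ} {z : ℂ} (h : DifferentiableAt ℂ f z) :
    HasDerivAt f (2 * π * I * D f z) z := by
  rw [D, mul_inv_cancel_left₀ two_pi_I_ne_zero]
  exact h.hasDerivAt

lemma D_congr_of_eqOn {U : Set ℂ} (hU : IsOpen U) {f g : ℂ → ℂ} (hfg : EqOn f g U) {z : ℂ}
    (hz : z ∈ U) : D f z = D g z := by
  rw [D, D, (Filter.eventuallyEq_of_mem (hU.mem_nhds hz) hfg).deriv_eq]

structure IsRamanujanSystem (U : Set ℂ) (e₂ e₄ e₆ : ℂ → ℂ) : Prop where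
  isOpen : IsOpen U
  differentiableOn_e₂ : DifferentiableOn ℂ e₂ U
  differentiableOn_e₄ : DifferentiableOn ℂ e₄ U
  differentiableOn_e₆ : DifferentiableOn ℂ e₆ U
  D_e₂ : ∀ z ∈ U, D e₂ z = (e₂ z ^ 2 - e₄ z) / 12
  D_e₄ : ∀ z ∈ U, D e₄ z = (e₂ z * e₄ z - e₆ z) / 3
  D_e₆ : ∀ z ∈ U, D e₆ z = (e₂ z * e₆ z - e₄ z ^ 2) / 2

namespace IsRamanujanSystem

variable {U : Set ℂ} {e₂ e₄ e₆ : ℂ → ℂ} (h : IsRamanujanSystem U e₂ e₄ e₆) {z : ℂ} (hz : z ∈ U)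
include h hz

lemma hasDerivAt_e₂ : HasDerivAt e₂ (2 * π * I * ((e₂ z ^ 2 - e₄ z) / 12)) z := by
  rw [← h.D_e₂ z hz]
  exact (h.differentiableOn_e₂.differentiableAt (h.isOpen.mem_nhds hz)).hasDerivAt_D

lemma hasDerivAt_e₄ : HasDerivAt e₄ (2 * π * I * ((e₂ z * e₄ z - e₆ z) / 3)) z := by
  rw [← h.D_e₄ z hz]
  exact (h.differentiableOn_e₄.differentiableAt (h.isOpen.mem_nhds hz)).hasDerivAt_D

lemma hasDerivAt_e₆ : HasDerivAt e₆ (2 * π * I * ((e₂ z * e₆ z - e₄ z ^ 2) / 2)) z := by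
  rw [← h.D_e₆ z hz]
  exact (h.differentiableOn_e₆.differentiableAt (h.isOpen.mem_nhds hz)).hasDerivAt_D

omit hz in
lemma D_D_e₂ : ∀ z ∈ U, D (D e₂) z = (e₂ z ^ 3 - 3 * e₂ z * e₄ z + 2 * e₆ z) / 72 := by
  intro z hz
  rw [D_congr_of_eqOn h.isOpen h.D_e₂ hz]
  apply HasDerivAt.D_eq
  refine (((h.hasDerivAt_e₂ hz).pow 2).sub (h.hasDerivAt_e₄ hz)).div_const 12 |>.congr_deriv ?_
  push_cast
  ring

lemma D_D_D_e₂ :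
    D (D (D e₂)) z = (e₂ z ^ 4 - 6 * e₂ z ^ 2 * e₄ z - 3 * e₄ z ^ 2 + 8 * e₂ z * e₆ z) / 288 := by
  rw [D_congr_of_eqOn h.isOpen h.D_D_e₂ hz]
  apply HasDerivAt.D_eq
  have he₂ := h.hasDerivAt_e₂ hz
  refine ((((he₂.pow 3).sub ((he₂.const_mul 3).mul (h.hasDerivAt_e₄ hz))).add
    ((h.hasDerivAt_e₆ hz).const_mul 2)).div_const 72).congr_deriv ?_
  push_cast
  ring

lemma chazy : D (D (D e₂)) z = e₂ z * D (D e₂) z - 3 / 2 * (D e₂ z) ^ 2 := by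
  rw [h.D_D_D_e₂ hz, h.D_D_e₂ z hz, h.D_e₂ z hz]
  ring

end IsRamanujanSystem

theorem stmt_18_general (U : Set ℂ) (hUopen : IsOpen U)
    (e₂ e₄ e₆ : ℂ → ℂ)
    (h2 : DifferentiableOn ℂ e₂ U) (h4 : DifferentiableOn ℂ e₄ U)
    (h6 : DifferentiableOn ℂ e₆ U)
    (hR2 : ∀ z ∈ U, D e₂ z = (e₂ z ^ 2 - e₄ z) / 12)
    (hR4 : ∀ z ∈ U, D e₄ z = (e₂ z * e₄ z - e₆ z) / 3)
    (hR6 : ∀ z ∈ U, D e₆ z = (e₂ z * e₆ z - e₄ z ^ 2) / 2) :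
    ∀ z ∈ U,
      D (D (D e₂)) z = e₂ z * D (D e₂) z - 3 / 2 * (D e₂ z) ^ 2 :=
  fun _ hz => (IsRamanujanSystem.mk hUopen h2 h4 h6 hR2 hR4 hR6).chazy hz

theorem stmt_18 (U : Set ℂ) (hUopen : IsOpen U) (hUne : U.Nonempty)
    (e₂ e₄ e₆ : ℂ → ℂ)
    (h2 : DifferentiableOn ℂ e₂ U) (h4 : DifferentiableOn ℂ e₄ U)
    (h6 : DifferentiableOn ℂ e₆ U)
    (hR2 : ∀ z ∈ U, D e₂ z = (e₂ z ^ 2 - e₄ z) / 12)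
    (hR4 : ∀ z ∈ U, D e₄ z = (e₂ z * e₄ z - e₆ z) / 3)
    (hR6 : ∀ z ∈ U, D e₆ z = (e₂ z * e₆ z - e₄ z ^ 2) / 2) :
    ∀ z ∈ U,
      D (D (D e₂)) z = e₂ z * D (D e₂) z - 3 / 2 * (D e₂ z) ^ 2 :=
  stmt_18_general U hUopen e₂ e₄ e₆ h2 h4 h6 hR2 hR4 hR6
end
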